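/- arXiv:2404.17081 — 8 statements merged into one kernel-verified Lean document; each statement's English description precedes it below -/
import Mathlib

section
/- The map π : ℝ³ → ℝ², π(a,b,c) = (4a−2b−2c, 2b−2c), restricted to the set Δ = {(a,b,c) : a,b,c ≥ 0 and a+b+c = 2·max{a,b,c}}, is a bijection onto ℝ². -/
/-! Each of `a`, `b`, `c` being the sum of the other two cuts out a face of `Δ`, and `π` maps
the three faces linearly onto the sectors `x ≥ |y|`, `y ≥ max x 0` and `-y ≥ max x 0`, on which
`2a` equals `x`, `y` and `-y` respectively. Hence `2a = max x |y|` on all of `Δ`, and `a`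
determines `b` and `c` through `π`, which yields an explicit inverse of `π` on `Δ`. -/

noncomputable def cpProj (p : ℝ × ℝ × ℝ) : ℝ × ℝ :=
  (4 * p.1 - 2 * p.2.1 - 2 * p.2.2, 2 * p.2.1 - 2 * p.2.2)

def triangleDelta : Set (ℝ × ℝ × ℝ) :=
  {p | 0 ≤ p.1 ∧ 0 ≤ p.2.1 ∧ 0 ≤ p.2.2 ∧
    p.1 + p.2.1 + p.2.2 = 2 * max p.1 (max p.2.1 p.2.2)}

theorem add_add_eq_two_mul_max_iff {α : Type*} [CommRing α] [LinearOrder α]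
    [IsStrictOrderedRing α] {a b c : α} (ha : 0 ≤ a) (hb : 0 ≤ b) (hc : 0 ≤ c) :
    a + b + c = 2 * max a (max b c) ↔ a = b + c ∨ b = a + c ∨ c = a + b := by
  constructor
  · intro h
    rcases max_choice a (max b c) with hm | hm <;> rw [hm] at h
    · left; linarith
    · rcases max_choice b c with hm' | hm' <;> rw [hm'] at h
      · right; left; linarith
      · right; right; linarith
  · rintro (h | h | h)
    · rw [max_eq_left (max_le (by linarith) (by linarith))]; linarith
    · rw [max_eq_left (a := b) (by linarith), max_eq_right (by linarith)]; linarith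
    · rw [max_eq_right (a := b) (by linarith), max_eq_right (by linarith)]; linarith

theorem mem_triangleDelta_iff {a b c : ℝ} :
    (a, b, c) ∈ triangleDelta ↔
      0 ≤ a ∧ 0 ≤ b ∧ 0 ≤ c ∧ (a = b + c ∨ b = a + c ∨ c = a + b) :=
  ⟨fun ⟨ha, hb, hc, h⟩ => ⟨ha, hb, hc, (add_add_eq_two_mul_max_iff ha hb hc).1 h⟩,
    fun ⟨ha, hb, hc, h⟩ => ⟨ha, hb, hc, (add_add_eq_two_mul_max_iff ha hb hc).2 h⟩⟩

noncomputable def cpLift (q : ℝ × ℝ) : ℝ × ℝ × ℝ :=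
  (max q.1 |q.2| / 2, (2 * max q.1 |q.2| - q.1 + q.2) / 4, (2 * max q.1 |q.2| - q.1 - q.2) / 4)

theorem cpProj_cpLift (q : ℝ × ℝ) : cpProj (cpLift q) = q := by
  simp only [cpProj, cpLift]
  ext <;> ring

theorem cpLift_mem_triangleDelta (q : ℝ × ℝ) : cpLift q ∈ triangleDelta := by
  obtain ⟨x, y⟩ := q
  have hx : x ≤ max x |y| := le_max_left _ _
  have hy : |y| ≤ max x |y| := le_max_right _ _
  have hy' := abs_le.1 hy
  refine mem_triangleDelta_iff.2 ⟨by linarith [abs_nonneg y], by linarith, by linarith, ?_⟩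
  rcases max_choice x |y| with hm | hm <;> rw [hm]
  · left; ring
  · rcases abs_choice y with habs | habs <;> rw [habs]
    · right; left; ring
    · right; right; ring

theorem max_cpProj_abs_eq {p : ℝ × ℝ × ℝ} (hp : p ∈ triangleDelta) :
    max (cpProj p).1 |(cpProj p).2| = 2 * p.1 := by
  obtain ⟨a, b, c⟩ := p
  obtain ⟨ha, hb, hc, h | h | h⟩ := mem_triangleDelta_iff.1 hp <;>
    simp only [cpProj] <;> subst h
  · rw [max_eq_left (abs_le.2 ⟨by linarith, by linarith⟩)]; ring
  · rw [abs_of_nonneg (by linarith), max_eq_right (by linarith)]; ring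
  · rw [abs_of_nonpos (by linarith), max_eq_right (by linarith)]; ring

theorem cpLift_cpProj {p : ℝ × ℝ × ℝ} (hp : p ∈ triangleDelta) : cpLift (cpProj p) = p := by
  have hm := max_cpProj_abs_eq hp
  simp only [cpLift, hm]
  obtain ⟨a, b, c⟩ := p
  simp only [cpProj, Prod.mk.injEq]
  refine ⟨?_, ?_, ?_⟩ <;> ring

theorem cpProj_bijOn_triangleDelta :
    Set.BijOn cpProj triangleDelta Set.univ :=
  Set.InvOn.bijOn ⟨fun _ hp => cpLift_cpProj hp, fun q _ => cpProj_cpLift q⟩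
    (Set.mapsTo_univ _ _) (fun q _ => cpLift_mem_triangleDelta q)
end

section
/- The map π : ℝ³ → ℝ², π(a,b,c) = (4a−2b−2c, 2b−2c), restricted to Δ = {(a,b,c) : a,b,c ≥ 0, a+b+c = 2·max{a,b,c}}, is a homeomorphism onto ℝ². -/
theorem continuous_cpProj : Continuous cpProj := by
  unfold cpProj; fun_prop

noncomputable def deltaLift (q : ℝ × ℝ) (m : ℝ) : ℝ × ℝ × ℝ :=
  ((q.1 + 4 * m) / 6, (8 * m - q.1 + 3 * q.2) / 12, (8 * m - q.1 - 3 * q.2) / 12)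

theorem cpProj_deltaLift (q : ℝ × ℝ) (m : ℝ) : cpProj (deltaLift q m) = q := by
  ext <;> simp only [cpProj, deltaLift] <;> ring

theorem deltaLift_cpProj (p : ℝ × ℝ × ℝ) :
    deltaLift (cpProj p) ((p.1 + p.2.1 + p.2.2) / 2) = p := by
  ext <;> simp only [cpProj, deltaLift] <;> ring

noncomputable def deltaMax (q : ℝ × ℝ) : ℝ := max (q.1 / 2) ((3 * |q.2| - q.1) / 4)

noncomputable def cpProjInv (q : ℝ × ℝ) : ℝ × ℝ × ℝ := deltaLift q (deltaMax q)

theorem continuous_cpProjInv : Continuous cpProjInv := by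
  unfold cpProjInv deltaLift deltaMax; fun_prop

theorem cpProj_cpProjInv (q : ℝ × ℝ) : cpProj (cpProjInv q) = q :=
  cpProj_deltaLift q _

theorem max_cpProjInv (q : ℝ × ℝ) :
    max (cpProjInv q).1 (max (cpProjInv q).2.1 (cpProjInv q).2.2) = deltaMax q := by
  simp only [cpProjInv, deltaLift, deltaMax, max_def, abs_eq_max_neg]
  split_ifs <;> linarith

theorem cpProjInv_mem_triangleDelta (q : ℝ × ℝ) : cpProjInv q ∈ triangleDelta := by
  have h₁ : q.1 / 2 ≤ deltaMax q := le_max_left _ _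
  have h₂ : (3 * |q.2| - q.1) / 4 ≤ deltaMax q := le_max_right _ _
  refine ⟨?_, ?_, ?_, ?_⟩
  · simp only [cpProjInv, deltaLift]; linarith [abs_nonneg q.2]
  · simp only [cpProjInv, deltaLift]; linarith [neg_abs_le q.2]
  · simp only [cpProjInv, deltaLift]; linarith [le_abs_self q.2]
  · rw [max_cpProjInv]; simp only [cpProjInv, deltaLift]; ring

theorem deltaMax_cpProj {p : ℝ × ℝ × ℝ} (hp : p ∈ triangleDelta) :
    deltaMax (cpProj p) = max p.1 (max p.2.1 p.2.2) := by
  obtain ⟨a, b, c⟩ := p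
  obtain ⟨-, -, -, hs⟩ := hp
  simp only [deltaMax, cpProj, max_def, abs_eq_max_neg] at hs ⊢
  split_ifs at hs ⊢ <;> linarith

theorem cpProjInv_cpProj {p : ℝ × ℝ × ℝ} (hp : p ∈ triangleDelta) : cpProjInv (cpProj p) = p := by
  have hmax : deltaMax (cpProj p) = (p.1 + p.2.1 + p.2.2) / 2 := by
    rw [deltaMax_cpProj hp, hp.2.2.2]; ring
  rw [cpProjInv, hmax, deltaLift_cpProj]

theorem cpProj_homeomorph_triangleDelta :
    ∃ e : triangleDelta ≃ₜ (ℝ × ℝ), ∀ x : triangleDelta, e x = cpProj x :=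
  ⟨{ toFun := fun p => cpProj p
     invFun := fun q => ⟨cpProjInv q, cpProjInv_mem_triangleDelta q⟩
     left_inv := fun p => Subtype.ext (cpProjInv_cpProj p.2)
     right_inv := cpProj_cpProjInv
     continuous_toFun := continuous_cpProj.comp continuous_subtype_val
     continuous_invFun := continuous_cpProjInv.subtype_mk _ }, fun _ => rfl⟩
end

section
/- The map π : ℝ³ → ℝ², π(a,b,c) = (4a−2b−2c, 2b−2c), restricted to the set 𝓗 = {(a,b,c) : a,b,c > 0 and cosh²a + cosh²b + cosh²c = 2·cosh a·cosh b·cosh c}, is injective. -/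
def collarH : Set (ℝ × ℝ × ℝ) :=
  {p | 0 < p.1 ∧ 0 < p.2.1 ∧ 0 < p.2.2 ∧
    Real.cosh p.1 ^ 2 + Real.cosh p.2.1 ^ 2 + Real.cosh p.2.2 ^ 2 =
      2 * Real.cosh p.1 * Real.cosh p.2.1 * Real.cosh p.2.2}


/-!
If `cpProj p = cpProj q` then `q - p` is a multiple of `(1, 1, 1)`, so it suffices that each line
in that direction meets `collarH` at most once. Along such a line the collar defect
`cosh² a + cosh² b + cosh² c - 2 cosh a cosh b cosh c` has negative derivative at every zero with
positive coordinates; in terms of `x = cosh a`, `u = sinh a`, … this is the inequality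
`u (yz - x) + v (xz - y) + w (xy - z) > 0` on the surface `x² + y² + z² = 2xyz`, which holds
pairwise because `(u (yz - x))² - (v (xz - y))² = y² - x²` there. A function that is decreasing
wherever it vanishes has at most one zero on an interval.
-/

open Real Set Filter Topology

theorem HasDerivAt.nonneg_of_eventually_le_left {f : ℝ → ℝ} {f' b : ℝ} (hf : HasDerivAt f f' b)
    (hle : ∀ᶠ x in 𝓝[<] b, f x ≤ f b) : 0 ≤ f' := by
  have hslope : Tendsto (slope f b) (𝓝[<] b) (𝓝 f') := by
    simpa using hasDerivWithinAt_iff_tendsto_slope.mp (hf.hasDerivWithinAt (s := Iio b))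
  refine ge_of_tendsto hslope ?_
  filter_upwards [hle, self_mem_nhdsWithin] with x hx hxb
  rw [slope_def_field]
  exact div_nonneg_of_nonpos (sub_nonpos.mpr hx) (sub_nonpos.mpr (le_of_lt hxb))

theorem Set.OrdConnected.subsingleton_zeros_of_hasDerivAt_neg {D : Set ℝ} (hD : D.OrdConnected)
    {f f' : ℝ → ℝ} (hf : ∀ x ∈ D, HasDerivAt f (f' x) x) (hneg : ∀ x ∈ D, f x = 0 → f' x < 0) :
    {x ∈ D | f x = 0}.Subsingleton := by
  suffices h : ∀ x ∈ {x ∈ D | f x = 0}, ∀ y ∈ {x ∈ D | f x = 0}, ¬ x < y from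
    fun x hx y hy => le_antisymm (not_lt.mp (h y hy x hx)) (not_lt.mp (h x hx y hy))
  rintro x ⟨hx, hfx⟩ y ⟨hy, hfy⟩ hxy
  have hIcc : Icc x y ⊆ D := hD.out hx hy
  -- `0` is a barrier that `f` cannot cross upwards, since `f` decreases wherever it vanishes.
  have hnonpos : ∀ z ∈ Icc x y, f z ≤ 0 :=
    image_le_of_deriv_right_lt_deriv_boundary
      (fun z hz => (hf z (hIcc hz)).continuousAt.continuousWithinAt)
      (fun z hz => (hf z (hIcc (Ico_subset_Icc_self hz))).hasDerivWithinAt) hfx.le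
      (fun _ => hasDerivAt_const _ (0 : ℝ))
      (fun z hz hfz => hneg z (hIcc (Ico_subset_Icc_self hz)) hfz)
  have hle : ∀ᶠ z in 𝓝[<] y, f z ≤ f y := by
    filter_upwards [Ioo_mem_nhdsLT hxy] with z hz
    exact hfy ▸ hnonpos z (Ioo_subset_Icc_self hz)
  exact (hneg y hy hfy).not_ge ((hf y hy).nonneg_of_eventually_le_left hle)

section CollarEquation

variable {x y z u v : ℝ}

theorem collar_pair_pos_of_lt (hy : 0 < y) (hz : 1 < z) (hv : 0 < v)
    (hu2 : u ^ 2 = x ^ 2 - 1) (hv2 : v ^ 2 = y ^ 2 - 1) (h : x ^ 2 + y ^ 2 + z ^ 2 = 2 * x * y * z)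
    (hlt : y * z < x) : 0 < u * (y * z - x) + v * (x * z - y) := by
  have hyx : y < x := by nlinarith
  have hsq : (u * (y * z - x)) ^ 2 - (v * (x * z - y)) ^ 2 = y ^ 2 - x ^ 2 := by
    linear_combination (y * z - x) ^ 2 * hu2 - (x * z - y) ^ 2 * hv2 + (x ^ 2 - y ^ 2) * h
  have hβ : 0 < x * z - y := by nlinarith
  have : u * (x - y * z) < v * (x * z - y) :=
    lt_of_pow_lt_pow_left₀ 2 (by positivity) (by nlinarith)
  linarith

theorem collar_pair_pos (hx : 0 < x) (hy : 0 < y) (hz : 1 < z) (hu : 0 < u) (hv : 0 < v)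
    (hu2 : u ^ 2 = x ^ 2 - 1) (hv2 : v ^ 2 = y ^ 2 - 1)
    (h : x ^ 2 + y ^ 2 + z ^ 2 = 2 * x * y * z) : 0 < u * (y * z - x) + v * (x * z - y) := by
  rcases lt_or_ge (y * z) x with hα | hα
  · exact collar_pair_pos_of_lt hy hz hv hu2 hv2 h hα
  rcases lt_or_ge (x * z) y with hβ | hβ
  · linarith [collar_pair_pos_of_lt hx hz hu hv2 hu2 (by linarith) hβ]
  have hvβ := mul_nonneg hv.le (sub_nonneg.mpr hβ)
  rcases hα.lt_or_eq with hα | hα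
  · nlinarith [mul_pos hu (sub_pos.mpr hα)]
  · have hβpos : 0 < x * z - y := by nlinarith
    nlinarith [mul_pos hv hβpos]

theorem collar_sum_pos {w : ℝ} (hx : 1 < x) (hy : 1 < y) (hz : 1 < z) (hu : 0 < u) (hv : 0 < v)
    (hw : 0 < w) (hu2 : u ^ 2 = x ^ 2 - 1) (hv2 : v ^ 2 = y ^ 2 - 1) (hw2 : w ^ 2 = z ^ 2 - 1)
    (h : x ^ 2 + y ^ 2 + z ^ 2 = 2 * x * y * z) :
    0 < u * (y * z - x) + v * (x * z - y) + w * (x * y - z) := by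
  have hxy := collar_pair_pos (by linarith) (by linarith) hz hu hv hu2 hv2 h
  have hyz := collar_pair_pos (by linarith) (by linarith) hx hv hw hv2 hw2 (by linarith)
  have hzx := collar_pair_pos (by linarith) (by linarith) hy hw hu hw2 hu2 (by linarith)
  linarith

end CollarEquation

noncomputable def collarDefect (a b c : ℝ) : ℝ :=
  cosh a ^ 2 + cosh b ^ 2 + cosh c ^ 2 - 2 * cosh a * cosh b * cosh c

noncomputable def collarDefectDiagDeriv (a b c : ℝ) : ℝ :=
  -2 * (sinh a * (cosh b * cosh c - cosh a) + sinh b * (cosh a * cosh c - cosh b) +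
    sinh c * (cosh a * cosh b - cosh c))

theorem mk_mem_collarH_iff {a b c : ℝ} :
    (a, b, c) ∈ collarH ↔ 0 < a ∧ 0 < b ∧ 0 < c ∧ collarDefect a b c = 0 := by
  simp only [collarH, collarDefect, mem_ofPred_eq, sub_eq_zero]

theorem hasDerivAt_collarDefect_diag (a b c s : ℝ) :
    HasDerivAt (fun t => collarDefect (a + t) (b + t) (c + t))
      (collarDefectDiagDeriv (a + s) (b + s) (c + s)) s := by
  have hcosh (d : ℝ) : HasDerivAt (fun t => cosh (d + t)) (sinh (d + s)) s := by
    simpa using ((hasDerivAt_id s).const_add d).cosh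
  have h := (((hcosh a).fun_pow 2).fun_add ((hcosh b).fun_pow 2)).fun_add ((hcosh c).fun_pow 2)
    |>.fun_sub ((((hcosh a).const_mul 2).fun_mul (hcosh b)).fun_mul (hcosh c))
  unfold collarDefect collarDefectDiagDeriv
  exact h.congr_deriv (by push_cast; ring)

theorem collarDefectDiagDeriv_neg {a b c : ℝ} (ha : 0 < a) (hb : 0 < b) (hc : 0 < c)
    (h : collarDefect a b c = 0) : collarDefectDiagDeriv a b c < 0 := by
  have hpos := collar_sum_pos (one_lt_cosh.mpr ha.ne') (one_lt_cosh.mpr hb.ne')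
    (one_lt_cosh.mpr hc.ne') (sinh_pos_iff.mpr ha) (sinh_pos_iff.mpr hb) (sinh_pos_iff.mpr hc)
    (by rw [cosh_sq]; ring) (by rw [cosh_sq]; ring) (by rw [cosh_sq]; ring)
    (by unfold collarDefect at h; linarith)
  unfold collarDefectDiagDeriv
  linarith

theorem eq_zero_of_add_mem_collarH {a b c t : ℝ} (h₀ : (a, b, c) ∈ collarH)
    (ht : (a + t, b + t, c + t) ∈ collarH) : t = 0 := by
  let D := Ioi (-a) ∩ Ioi (-b) ∩ Ioi (-c)
  have hzero {s : ℝ} (hs : (a + s, b + s, c + s) ∈ collarH) :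
      s ∈ {s ∈ D | collarDefect (a + s) (b + s) (c + s) = 0} := by
    obtain ⟨ha, hb, hc, h⟩ := mk_mem_collarH_iff.mp hs
    refine ⟨⟨⟨?_, ?_⟩, ?_⟩, h⟩ <;> rw [mem_Ioi] <;> linarith
  have hsub := (inferInstance : D.OrdConnected).subsingleton_zeros_of_hasDerivAt_neg
    (fun s _ => hasDerivAt_collarDefect_diag a b c s)
    (fun s ⟨⟨ha, hb⟩, hc⟩ h => collarDefectDiagDeriv_neg (neg_lt_iff_pos_add'.mp ha)
      (neg_lt_iff_pos_add'.mp hb) (neg_lt_iff_pos_add'.mp hc) h)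
  exact hsub (hzero ht) (hzero (by simpa using h₀))

theorem cpProj_injOn_collarH : Set.InjOn cpProj collarH := by
  rintro ⟨a, b, c⟩ hp ⟨a', b', c'⟩ hq hproj
  simp only [cpProj, Prod.mk.injEq] at hproj
  have hshift : (a', b', c') = (a + (a' - a), b + (a' - a), c + (a' - a)) := by
    simp only [Prod.mk.injEq]; exact ⟨by ring, by linarith, by linarith⟩
  have ht : a' - a = 0 := eq_zero_of_add_mem_collarH hp (hshift ▸ hq)
  simp only [Prod.mk.injEq]
  exact ⟨by linarith, by linarith, by linarith⟩
end

section
/- Every point of 𝓗 = {(a,b,c) ∈ ℝ³ : a,b,c > 0, cosh²a + cosh²b + cosh²c = 2 cosh a cosh b cosh c} lies in the open cone over the triangle with vertices (1,1,0), (1,0,1), (0,1,1); that is, for (a,b,c) ∈ 𝓗 each of a+b−c, b+c−a, a+c−b is strictly positive. -/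
/-!
Completing the square turns the defining equation into
`(cosh c - cosh a cosh b)² = sinh² a sinh² b - 1`, so
`|cosh c - cosh a cosh b| < sinh a sinh b`. By the addition formulas this says
`cosh (a - b) < cosh c < cosh (a + b)`, and since `cosh` is strictly increasing on `[0, ∞)`,
`|a - b| < c < a + b`.
-/

open Real

theorem cosh_sq_add_cosh_sq_add_cosh_sq_eq_iff (a b c : ℝ) :
    cosh a ^ 2 + cosh b ^ 2 + cosh c ^ 2 = 2 * cosh a * cosh b * cosh c ↔
      (cosh c - cosh a * cosh b) ^ 2 = sinh a ^ 2 * sinh b ^ 2 - 1 := by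
  rw [sinh_sq, sinh_sq]
  constructor <;> intro h <;> linear_combination h

theorem abs_cosh_sub_cosh_mul_cosh_lt {a b c : ℝ} (ha : 0 ≤ a) (hb : 0 ≤ b)
    (h : cosh a ^ 2 + cosh b ^ 2 + cosh c ^ 2 = 2 * cosh a * cosh b * cosh c) :
    |cosh c - cosh a * cosh b| < sinh a * sinh b := by
  have hsq := (cosh_sq_add_cosh_sq_add_cosh_sq_eq_iff a b c).mp h
  refine abs_lt_of_sq_lt_sq ?_ (mul_nonneg (sinh_nonneg_iff.mpr ha) (sinh_nonneg_iff.mpr hb))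
  rw [hsq, mul_pow]
  linarith

theorem abs_sub_lt_abs_and_abs_lt_add {a b c : ℝ} (ha : 0 ≤ a) (hb : 0 ≤ b)
    (h : cosh a ^ 2 + cosh b ^ 2 + cosh c ^ 2 = 2 * cosh a * cosh b * cosh c) :
    |a - b| < |c| ∧ |c| < a + b := by
  obtain ⟨hlow, hhigh⟩ := abs_lt.mp (abs_cosh_sub_cosh_mul_cosh_lt ha hb h)
  have hsub : cosh (a - b) < cosh c := by rw [cosh_sub]; linarith
  have hadd : cosh c < cosh (a + b) := by rw [cosh_add]; linarith
  rw [cosh_lt_cosh] at hsub hadd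
  exact ⟨hsub, by rwa [abs_of_nonneg (add_nonneg ha hb)] at hadd⟩

theorem collarH_subset_cone (a b c : ℝ) (ha : 0 < a) (hb : 0 < b) (hc : 0 < c)
    (h : Real.cosh a ^ 2 + Real.cosh b ^ 2 + Real.cosh c ^ 2 =
      2 * Real.cosh a * Real.cosh b * Real.cosh c) :
    0 < a + b - c ∧ 0 < b + c - a ∧ 0 < a + c - b := by
  obtain ⟨hsub, hadd⟩ := abs_sub_lt_abs_and_abs_lt_add ha.le hb.le h
  rw [abs_of_pos hc] at hsub hadd
  obtain ⟨hba, hab⟩ := abs_lt.mp hsub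
  exact ⟨by linarith, by linarith, by linarith⟩
end

section
/- For fixed a, b > 0 with sinh a · sinh b > 1, the quadratic equation x² − 2 cosh a cosh b · x + cosh²a + cosh²b = 0 has two distinct real roots, both greater than 1. -/
/-!
The reduced discriminant `(cosh a cosh b)² - cosh² a - cosh² b` equals `(sinh a sinh b)² - 1 > 0`,
so the roots are `cosh a cosh b ± √((sinh a sinh b)² - 1)`. The smaller one exceeds `1` because
`cosh a cosh b - sinh a sinh b = cosh (a - b) ≥ 1` and `√(s² - 1) < s` for `s = sinh a sinh b > 1`.
-/

open Real

theorem sq_sub_two_mul_add_sq_sub_sq_eq_zero_iff {R : Type*} [CommRing R] [NoZeroDivisors R]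
    {c d x : R} : x ^ 2 - 2 * c * x + (c ^ 2 - d ^ 2) = 0 ↔ x = c + d ∨ x = c - d := by
  have factor : x ^ 2 - 2 * c * x + (c ^ 2 - d ^ 2) = (x - (c + d)) * (x - (c - d)) := by ring
  rw [factor, mul_eq_zero, sub_eq_zero, sub_eq_zero]

theorem Real.cosh_sq_add_cosh_sq (a b : ℝ) :
    cosh a ^ 2 + cosh b ^ 2 = (cosh a * cosh b) ^ 2 - ((sinh a * sinh b) ^ 2 - 1) := by
  linear_combination (1 - cosh b ^ 2) * cosh_sq' a - sinh a ^ 2 * cosh_sq' b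

theorem Real.one_add_sinh_mul_sinh_le_cosh_mul_cosh (a b : ℝ) :
    1 + sinh a * sinh b ≤ cosh a * cosh b := by
  linarith [cosh_sub a b, one_le_cosh (a - b)]

theorem collar_quadratic_roots_general (a b : ℝ)
    (h : 1 < Real.sinh a * Real.sinh b) :
    ∃ x₁ x₂ : ℝ, x₁ ≠ x₂ ∧ 1 < x₁ ∧ 1 < x₂ ∧
      (x₁ ^ 2 - 2 * Real.cosh a * Real.cosh b * x₁ + Real.cosh a ^ 2 + Real.cosh b ^ 2 = 0) ∧
      (x₂ ^ 2 - 2 * Real.cosh a * Real.cosh b * x₂ + Real.cosh a ^ 2 + Real.cosh b ^ 2 = 0) ∧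
      ∀ x : ℝ, x ^ 2 - 2 * Real.cosh a * Real.cosh b * x + Real.cosh a ^ 2 + Real.cosh b ^ 2 = 0 →
        x = x₁ ∨ x = x₂ := by
  set s := sinh a * sinh b
  set c := cosh a * cosh b
  set d := √(s ^ 2 - 1)
  have hd_sq : d ^ 2 = s ^ 2 - 1 := sq_sqrt (by nlinarith)
  have hd_pos : 0 < d := sqrt_pos.2 (by nlinarith)
  have hd_lt : d < s := (sqrt_lt' (by linarith)).2 (by linarith)
  have hc : 1 + s ≤ c := one_add_sinh_mul_sinh_le_cosh_mul_cosh a b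
  have roots (x : ℝ) : x ^ 2 - 2 * cosh a * cosh b * x + cosh a ^ 2 + cosh b ^ 2 = 0 ↔
      x = c + d ∨ x = c - d := by
    rw [← sq_sub_two_mul_add_sq_sub_sq_eq_zero_iff, hd_sq, add_assoc, cosh_sq_add_cosh_sq]
    simp only [c, s]
    ring_nf
  refine ⟨c + d, c - d, ne_of_gt (by linarith), by linarith, by linarith,
    (roots _).2 (.inl rfl), (roots _).2 (.inr rfl), fun x hx => (roots x).1 hx⟩

theorem collar_quadratic_roots (a b : ℝ) (ha : 0 < a) (hb : 0 < b)
    (h : 1 < Real.sinh a * Real.sinh b) :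
    ∃ x₁ x₂ : ℝ, x₁ ≠ x₂ ∧ 1 < x₁ ∧ 1 < x₂ ∧
      (x₁ ^ 2 - 2 * Real.cosh a * Real.cosh b * x₁ + Real.cosh a ^ 2 + Real.cosh b ^ 2 = 0) ∧
      (x₂ ^ 2 - 2 * Real.cosh a * Real.cosh b * x₂ + Real.cosh a ^ 2 + Real.cosh b ^ 2 = 0) ∧
      ∀ x : ℝ, x ^ 2 - 2 * Real.cosh a * Real.cosh b * x + Real.cosh a ^ 2 + Real.cosh b ^ 2 = 0 →
        x = x₁ ∨ x = x₂ :=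
  collar_quadratic_roots_general a b h
end

section
/- For a > 0 and τ ∈ ℝ, let b = arccosh(cosh τ · coth a) and c = arccosh(cosh(a−τ) · coth a). Then (a,b,c) satisfies cosh²a + cosh²b + cosh²c = 2 cosh a cosh b cosh c. -/
/-- Inverse hyperbolic cosine on [1, ∞). -/
noncomputable def arcosh (x : ℝ) : ℝ := Real.log (x + Real.sqrt (x ^ 2 - 1))

/-!
Write `a = τ + (a - τ)`. For any splitting `a = s + t` the addition formula gives
`cosh² s + cosh² t - 2 cosh a cosh s cosh t = -sinh² a`; multiplying by `coth² a` turns this into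
`cosh² b + cosh² c - 2 cosh a cosh b cosh c = -cosh² a`, which is the collar equation.
-/

section

open Real

theorem cosh_sq_add_cosh_sq_sub_two_mul_cosh_add (s t : ℝ) :
    cosh s ^ 2 + cosh t ^ 2 - 2 * cosh (s + t) * cosh s * cosh t = -sinh (s + t) ^ 2 := by
  rw [cosh_add, sinh_add]
  linear_combination (-cosh t ^ 2) * cosh_sq_sub_sinh_sq s - cosh s ^ 2 * cosh_sq_sub_sinh_sq t

theorem collar_equation_of_add {s t k : ℝ} (hk : k * sinh (s + t) = cosh (s + t)) :
    cosh (s + t) ^ 2 + (cosh s * k) ^ 2 + (cosh t * k) ^ 2 =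
      2 * cosh (s + t) * (cosh s * k) * (cosh t * k) := by
  linear_combination k ^ 2 * cosh_sq_add_cosh_sq_sub_two_mul_cosh_add s t
    - (k * sinh (s + t) + cosh (s + t)) * hk

theorem one_le_cosh_mul_coth (t : ℝ) {a : ℝ} (ha : 0 < a) : 1 ≤ cosh t * (cosh a / sinh a) := by
  have hcoth : 1 < cosh a / sinh a := (one_lt_div (sinh_pos_iff.2 ha)).2 (sinh_lt_cosh a)
  nlinarith [one_le_cosh t]

end

theorem collar_equation_of_fenchel_nielsen (a τ : ℝ) (ha : 0 < a) :
    let b := arcosh (Real.cosh τ * (Real.cosh a / Real.sinh a))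
    let c := arcosh (Real.cosh (a - τ) * (Real.cosh a / Real.sinh a))
    Real.cosh a ^ 2 + Real.cosh b ^ 2 + Real.cosh c ^ 2 =
      2 * Real.cosh a * Real.cosh b * Real.cosh c := by
  intro b c
  -- `arcosh` is definitionally `Real.arcosh`, so Mathlib's `Real.cosh_arcosh` applies.
  have hb : Real.cosh b = Real.cosh τ * (Real.cosh a / Real.sinh a) :=
    Real.cosh_arcosh (one_le_cosh_mul_coth τ ha)
  have hc : Real.cosh c = Real.cosh (a - τ) * (Real.cosh a / Real.sinh a) :=
    Real.cosh_arcosh (one_le_cosh_mul_coth (a - τ) ha)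
  have hcoth : Real.cosh a / Real.sinh a * Real.sinh (τ + (a - τ)) = Real.cosh (τ + (a - τ)) := by
    rw [add_sub_cancel]
    exact div_mul_cancel₀ _ (Real.sinh_pos_iff.2 ha).ne'
  have key := collar_equation_of_add hcoth
  rw [add_sub_cancel] at key
  rwa [hb, hc]
end

section
/- For a > 0 and τ ∈ ℝ, the triples (a, arccosh(cosh τ coth a), arccosh(cosh(a−τ) coth a)) converge, as a → ∞ with τ/a fixed equal to s ∈ (0,1), to satisfy the triangle equality asymptotically: arccosh(cosh τ coth a) − τ → 0 and arccosh(cosh(a−τ) coth a) − (a−τ) → 0 as a → ∞ with τ = s·a. -/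
open Filter Topology

/-! Since `arcosh (cosh t) = t` and `arcosh y ≤ log (2 y)`, for `c ≥ 1` we get
`0 ≤ arcosh (cosh t * c) - t ≤ (log (2 cosh t) - t) + log c = log (1 + e^{-2t}) + log c`.
Both terms vanish when `t → ∞` and `c → 1`; for the collar, `c = coth a` and `t = s a` or
`t = (1 - s) a`. -/

lemma arcosh_eq_real_arcosh : arcosh = Real.arcosh := rfl

namespace Real

lemma arcosh_le_log_two_mul {y : ℝ} (hy : 0 < y) : arcosh y ≤ log (2 * y) := by
  have hsqrt : √(y ^ 2 - 1) ≤ y := (sqrt_le_left hy.le).2 (by linarith)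
  exact log_le_log (by positivity) (by linarith)

lemma tendsto_log_two_mul_cosh_sub_atTop :
    Tendsto (fun t => log (2 * cosh t) - t) atTop (𝓝 0) := by
  have hrewrite : ∀ t, log (2 * cosh t) - t = log (1 + exp (-t) ^ 2) := fun t => by
    have : 2 * cosh t / exp t = 1 + exp (-t) ^ 2 := by
      rw [cosh_eq, exp_neg]
      field_simp
    rw [← this, log_div (by positivity) (exp_ne_zero t), log_exp]
  have h : Tendsto (fun t => 1 + exp (-t) ^ 2) atTop (𝓝 1) := by
    simpa using (tendsto_exp_neg_atTop_nhds_zero.pow 2).const_add 1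
  simpa [hrewrite, Function.comp_def] using (continuousAt_log one_ne_zero).tendsto.comp h

lemma tendsto_sinh_atTop : Tendsto sinh atTop atTop :=
  tendsto_atTop_mono' _ (eventually_ge_atTop 0 |>.mono fun _ => self_le_sinh_iff.2) tendsto_id

lemma tendsto_cosh_div_sinh_atTop : Tendsto (fun a => cosh a / sinh a) atTop (𝓝 1) := by
  have hcoth : ∀ᶠ a in atTop, 1 + exp (-a) / sinh a = cosh a / sinh a := by
    filter_upwards [eventually_gt_atTop 0] with a ha
    rw [← cosh_sub_sinh, one_add_div (sinh_pos_iff.2 ha).ne', add_sub_cancel]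
  simpa using (tendsto_exp_neg_atTop_nhds_zero.div_atTop tendsto_sinh_atTop).const_add 1
    |>.congr' hcoth

lemma one_le_cosh_div_sinh {a : ℝ} (ha : 0 < a) : 1 ≤ cosh a / sinh a :=
  (one_le_div (sinh_pos_iff.2 ha)).2 (sinh_lt_cosh a).le

lemma tendsto_arcosh_cosh_mul_sub {α : Type*} {l : Filter α} {t c : α → ℝ}
    (ht : Tendsto t l atTop) (hc : Tendsto c l (𝓝 1)) (hc1 : ∀ᶠ x in l, 1 ≤ c x) :
    Tendsto (fun x => arcosh (cosh (t x) * c x) - t x) l (𝓝 0) := by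
  have hupper : Tendsto (fun x => (log (2 * cosh (t x)) - t x) + log (c x)) l (𝓝 0) := by
    simpa using (tendsto_log_two_mul_cosh_sub_atTop.comp ht).add
      ((continuousAt_log one_ne_zero).tendsto.comp hc)
  refine tendsto_of_tendsto_of_tendsto_of_le_of_le' tendsto_const_nhds hupper ?_ ?_
  · filter_upwards [hc1, ht.eventually_ge_atTop 0] with x hcx htx
    have : arcosh (cosh (t x)) ≤ arcosh (cosh (t x) * c x) :=
      (arcosh_le_arcosh (cosh_pos _) (by positivity)).2
        (le_mul_of_one_le_right (cosh_pos _).le hcx)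
    rw [arcosh_cosh htx] at this
    linarith
  · filter_upwards [hc1] with x hcx
    have := arcosh_le_log_two_mul (mul_pos (cosh_pos (t x)) (by linarith))
    rw [← mul_assoc, log_mul (by positivity) (by linarith)] at this
    linarith

end Real

theorem collar_asymptotic_to_triangle (s : ℝ) (hs0 : 0 < s) (hs1 : s < 1) :
    Tendsto (fun a : ℝ =>
        arcosh (Real.cosh (s * a) * (Real.cosh a / Real.sinh a)) - s * a)
      atTop (𝓝 0) ∧
    Tendsto (fun a : ℝ =>
        arcosh (Real.cosh (a - s * a) * (Real.cosh a / Real.sinh a)) - (a - s * a))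
      atTop (𝓝 0) := by
  have hcoth_ge : ∀ᶠ a in atTop, 1 ≤ Real.cosh a / Real.sinh a :=
    (eventually_gt_atTop 0).mono fun _ => Real.one_le_cosh_div_sinh
  have hlinear : ∀ {k : ℝ}, 0 < k → Tendsto (fun a : ℝ => k * a) atTop atTop :=
    fun hk => tendsto_id.const_mul_atTop hk
  rw [arcosh_eq_real_arcosh]
  refine ⟨Real.tendsto_arcosh_cosh_mul_sub (hlinear hs0) Real.tendsto_cosh_div_sinh_atTop
    hcoth_ge, ?_⟩
  simpa only [sub_mul, one_mul] using Real.tendsto_arcosh_cosh_mul_sub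
    (hlinear (sub_pos.2 hs1)) Real.tendsto_cosh_div_sinh_atTop hcoth_ge
end

section
/- For all a, b > 0 with sinh a · sinh b ≥ 1, define the quadratic form on ℝ² by ds²(dx,dy) = (a² + (a/sinh a)²·(sinh(b·y)/sinh b)²)·dx² + 2ab·√(1 − 1/(sinh a sinh b)²)·dx·dy + b²·dy², for any fixed y ∈ [−1,1]. Then |ds²(dx,dy) − (a·dx + b·dy)²| ≤ 2(dx² + dy²) for all (dx,dy) ∈ ℝ². -/
/-!
The difference of the two forms is `E dx² - 2c dx dy` with `E = (a / sinh a)² (sinh (b y) / sinh b)²`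
and `c = a b (1 - √(1 - t²))`, `t = 1 / (sinh a sinh b)`. Since `|x| ≤ |sinh x|` and `|sinh|` grows
with `|x|`, `|E| ≤ 1`. Since `1 - √(1 - t²) ≤ t²` and `|a b| ≤ sinh a sinh b = 1 / t`, also
`|c| ≤ t ≤ 1`. Finally `|E dx² - 2c dx dy| ≤ dx² + (dx² + dy²)`.
-/

open Real

theorem abs_le_abs_sinh (x : ℝ) : |x| ≤ |sinh x| := by
  rw [abs_sinh]
  exact self_le_sinh_iff.mpr (abs_nonneg x)

theorem abs_sinh_mul_le (b : ℝ) {y : ℝ} (hy : |y| ≤ 1) : |sinh (b * y)| ≤ |sinh b| := by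
  rw [abs_sinh, abs_sinh, sinh_le_sinh, abs_mul]
  exact mul_le_of_le_one_right (abs_nonneg b) hy

theorem div_sq_le_one_of_abs_le {u v : ℝ} (h : |u| ≤ |v|) : (u / v) ^ 2 ≤ 1 := by
  rw [div_pow]
  exact div_le_one_of_le₀ (sq_le_sq.mpr h) (sq_nonneg v)

theorem abs_one_sub_sqrt_one_sub_sq_le {t : ℝ} (ht : t ^ 2 ≤ 1) : |1 - √(1 - t ^ 2)| ≤ t ^ 2 := by
  have hu : 0 ≤ 1 - t ^ 2 := sub_nonneg.mpr ht
  have h_le_one : √(1 - t ^ 2) ≤ 1 := sqrt_le_one.mpr (by linarith [sq_nonneg t])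
  have h_ge : 1 - t ^ 2 ≤ √(1 - t ^ 2) := by
    calc 1 - t ^ 2 = √(1 - t ^ 2) * √(1 - t ^ 2) := (mul_self_sqrt hu).symm
      _ ≤ √(1 - t ^ 2) * 1 := mul_le_mul_of_nonneg_left h_le_one (sqrt_nonneg _)
      _ = √(1 - t ^ 2) := mul_one _
  rw [abs_of_nonneg (sub_nonneg.mpr h_le_one)]
  linarith

theorem abs_mul_sqrt_one_sub_one_div_sq_sub_one_le {c P : ℝ} (hP : 1 ≤ P) (hc : |c| ≤ P) :
    |c * (√(1 - (1 / P) ^ 2) - 1)| ≤ 1 := by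
  have hP0 : 0 < P := one_pos.trans_le hP
  have ht : (1 / P) ^ 2 ≤ 1 := div_sq_le_one_of_abs_le (by rwa [abs_one, abs_of_pos hP0])
  calc |c * (√(1 - (1 / P) ^ 2) - 1)| = |c| * |1 - √(1 - (1 / P) ^ 2)| := by
        rw [abs_mul, abs_sub_comm]
    _ ≤ P * (1 / P) ^ 2 :=
        mul_le_mul hc (abs_one_sub_sqrt_one_sub_sq_le ht) (abs_nonneg _) hP0.le
    _ = 1 / P := by field_simp
    _ ≤ 1 := (div_le_one hP0).mpr hP

theorem abs_sq_add_two_mul_mul_le {E c : ℝ} (hE : |E| ≤ 1) (hc : |c| ≤ 1) (dx dy : ℝ) :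
    |E * dx ^ 2 + 2 * c * dx * dy| ≤ 2 * (dx ^ 2 + dy ^ 2) := by
  have hcross : |2 * dx * dy| ≤ dx ^ 2 + dy ^ 2 := by
    rw [abs_le]
    constructor <;> nlinarith [sq_nonneg (dx + dy), sq_nonneg (dx - dy)]
  calc |E * dx ^ 2 + 2 * c * dx * dy| ≤ |E| * dx ^ 2 + |c| * |2 * dx * dy| := by
        refine (abs_add_le _ _).trans ?_
        rw [abs_mul, abs_sq, show 2 * c * dx * dy = c * (2 * dx * dy) by ring, abs_mul]
    _ ≤ 1 * dx ^ 2 + 1 * (dx ^ 2 + dy ^ 2) := by gcongr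
    _ ≤ 2 * (dx ^ 2 + dy ^ 2) := by nlinarith [sq_nonneg dy]

theorem collar_metric_comparison_general (a b y : ℝ)
    (hab : 1 ≤ Real.sinh a * Real.sinh b) (hy : y ∈ Set.Icc (-1 : ℝ) 1)
    (dx dy : ℝ) :
    |((a ^ 2 + (a / Real.sinh a) ^ 2 * (Real.sinh (b * y) / Real.sinh b) ^ 2) * dx ^ 2 +
        2 * a * b * Real.sqrt (1 - (1 / (Real.sinh a * Real.sinh b)) ^ 2) * dx * dy +
        b ^ 2 * dy ^ 2) -
      (a * dx + b * dy) ^ 2| ≤ 2 * (dx ^ 2 + dy ^ 2) := by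
  have hE : |(a / sinh a) ^ 2 * (sinh (b * y) / sinh b) ^ 2| ≤ 1 := by
    rw [abs_of_nonneg (by positivity)]
    exact mul_le_one₀ (div_sq_le_one_of_abs_le (abs_le_abs_sinh a)) (sq_nonneg _)
      (div_sq_le_one_of_abs_le (abs_sinh_mul_le b (abs_le.mpr hy)))
  have hab_le : |a * b| ≤ sinh a * sinh b := by
    rw [← abs_of_pos (one_pos.trans_le hab), abs_mul, abs_mul]
    exact mul_le_mul (abs_le_abs_sinh a) (abs_le_abs_sinh b) (abs_nonneg b) (abs_nonneg _)
  have hc := abs_mul_sqrt_one_sub_one_div_sq_sub_one_le hab hab_le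
  convert abs_sq_add_two_mul_mul_le hE hc dx dy using 2
  ring

theorem collar_metric_comparison (a b y : ℝ) (ha : 0 < a) (hb : 0 < b)
    (hab : 1 ≤ Real.sinh a * Real.sinh b) (hy : y ∈ Set.Icc (-1 : ℝ) 1)
    (dx dy : ℝ) :
    |((a ^ 2 + (a / Real.sinh a) ^ 2 * (Real.sinh (b * y) / Real.sinh b) ^ 2) * dx ^ 2 +
        2 * a * b * Real.sqrt (1 - (1 / (Real.sinh a * Real.sinh b)) ^ 2) * dx * dy +
        b ^ 2 * dy ^ 2) -
      (a * dx + b * dy) ^ 2| ≤ 2 * (dx ^ 2 + dy ^ 2) :=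
  collar_metric_comparison_general a b y hab hy dx dy
end
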